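/- For s₀ ∈ ℂ with Re s₀ > 1, one has lim_{s→1⁺, s real} ( ζ₂(s₀, s) - ζ(s₀)/(s-1) ) = γ₂(s₀); in particular ζ₂(s₀, s), as a function of s, has a simple pole at s = 1 with residue ζ(s₀). -/

import Mathlib

/-!
Summing over `n` first gives `ζ₂(s₀, s) = ζ(s₀) ζ(s) - ∑ₘ m^{-s₀} Hₘ(s)`, where
`Hₘ(s) = ∑_{k ≤ m} k^{-s}`.
As `s → 1⁺`, `ζ(s) - 1/(s - 1) → γ` and `Hₘ(s) → Hₘ`, so the difference tends to
`ζ(s₀) γ - ∑ₘ m^{-s₀} Hₘ`. This is also `γ₂(s₀)`, since the inner limit in its definition is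
`γ - Hₘ`. Both interchanges of limit and sum are dominated convergence with majorant
`m^{-Re s₀} (c + log m)`, from `Hₘ ≤ 1 + log m` and `|H_N - log N| ≤ 1`.
-/

open Filter Finset Topology

noncomputable def partialZeta (s : ℂ) (n : ℕ) : ℂ :=
  ∑ k ∈ range n, ((k + 1 : ℕ) : ℂ) ^ (-s)

lemma norm_natCast_succ_cpow_neg (s : ℂ) (m : ℕ) :
    ‖((m + 1 : ℕ) : ℂ) ^ (-s)‖ = ((m : ℝ) + 1) ^ (-s.re) := by
  rw [Complex.norm_natCast_cpow_of_pos m.succ_pos, Complex.neg_re]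
  push_cast
  rfl

lemma hasSum_riemannZeta {s : ℂ} (hs : 1 < s.re) :
    HasSum (fun n : ℕ => ((n + 1 : ℕ) : ℂ) ^ (-s)) (riemannZeta s) := by
  rw [zeta_eq_tsum_one_div_nat_add_one_cpow hs]
  have hsum := ((summable_nat_add_iff 1).mpr (Complex.summable_one_div_nat_cpow.mpr hs)).hasSum
  push_cast at hsum ⊢
  simpa [Complex.cpow_neg] using hsum

lemma summable_rpow_neg {r : ℝ} (hr : 1 < r) :
    Summable (fun m : ℕ => ((m : ℝ) + 1) ^ (-r)) := by
  have := (summable_nat_add_iff 1).mpr (Real.summable_nat_rpow.mpr (neg_lt_neg hr))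
  exact_mod_cast this

lemma summable_rpow_neg_mul_log {r : ℝ} (hr : 1 < r) :
    Summable (fun m : ℕ => ((m : ℝ) + 1) ^ (-r) * Real.log ((m : ℝ) + 1)) := by
  set ε := (r - 1) / 2
  have hε : 0 < ε := by simp only [ε]; linarith
  have hmajorant := (summable_rpow_neg (r := r - ε) (by simp only [ε]; linarith)).mul_left ε⁻¹
  refine hmajorant.of_nonneg_of_le
    (fun m => mul_nonneg (by positivity) (Real.log_nonneg (by simp))) (fun m => ?_)
  have hx : (0 : ℝ) < (m : ℝ) + 1 := by positivity
  calc ((m : ℝ) + 1) ^ (-r) * Real.log ((m : ℝ) + 1)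
      ≤ ((m : ℝ) + 1) ^ (-r) * (((m : ℝ) + 1) ^ ε / ε) := by
        gcongr; exact Real.log_le_rpow_div hx.le hε
    _ = ε⁻¹ * ((m : ℝ) + 1) ^ (-(r - ε)) := by
        rw [neg_sub, sub_eq_neg_add, Real.rpow_add hx]; ring

lemma summable_rpow_neg_mul_add_log {r : ℝ} (hr : 1 < r) (c : ℝ) :
    Summable (fun m : ℕ => ((m : ℝ) + 1) ^ (-r) * (c + Real.log ((m : ℝ) + 1))) := by
  simp only [mul_add]
  exact ((summable_rpow_neg hr).mul_right c).add (summable_rpow_neg_mul_log hr)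

lemma norm_natCast_succ_cpow_neg_mul_le (s : ℂ) (m : ℕ) {z : ℂ} {b : ℝ} (hz : ‖z‖ ≤ b) :
    ‖((m + 1 : ℕ) : ℂ) ^ (-s) * z‖ ≤ ((m : ℝ) + 1) ^ (-s.re) * b := by
  rw [norm_mul, norm_natCast_succ_cpow_neg]
  exact mul_le_mul_of_nonneg_left hz (by positivity)

lemma summable_natCast_succ_cpow_neg_mul {s : ℂ} (hs : 1 < s.re) {f : ℕ → ℂ} {c : ℝ}
    (hf : ∀ m, ‖f m‖ ≤ c + Real.log ((m : ℝ) + 1)) :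
    Summable (fun m : ℕ => ((m + 1 : ℕ) : ℂ) ^ (-s) * f m) :=
  .of_norm_bounded (summable_rpow_neg_mul_add_log hs c) fun m =>
    norm_natCast_succ_cpow_neg_mul_le s m (hf m)

lemma norm_harmonic_le (n : ℕ) : ‖(harmonic n : ℂ)‖ ≤ 1 + Real.log n := by
  have hpos : (0 : ℝ) ≤ harmonic n := (Real.log_nonneg (by simp)).trans (log_add_one_le_harmonic n)
  rw [Complex.norm_ratCast, abs_of_nonneg hpos]
  exact harmonic_le_one_add_log n

lemma abs_harmonic_sub_log_le_one (n : ℕ) : |(harmonic n : ℝ) - Real.log n| ≤ 1 := by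
  rcases n.eq_zero_or_pos with rfl | hn
  · simp
  have hlog : Real.log n ≤ Real.log ↑(n + 1) := Real.log_le_log (by positivity) (by simp)
  rw [abs_le]
  constructor <;> linarith [log_add_one_le_harmonic n, harmonic_le_one_add_log n]

lemma partialZeta_one (n : ℕ) : partialZeta 1 n = harmonic n := by
  simp only [partialZeta, harmonic, Complex.cpow_neg_one]
  push_cast
  rfl

lemma continuous_partialZeta (n : ℕ) : Continuous (fun s => partialZeta s n) :=
  continuous_finsetSum _ fun k _ =>
    continuous_neg.const_cpow (Or.inl (by exact_mod_cast k.succ_ne_zero))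

lemma norm_partialZeta_le {s : ℂ} (hs : 1 ≤ s.re) (n : ℕ) :
    ‖partialZeta s n‖ ≤ 1 + Real.log n := by
  refine (norm_sum_le _ _).trans (le_trans ?_ (harmonic_le_one_add_log n))
  simp only [harmonic, Rat.cast_sum, Rat.cast_inv, norm_natCast_succ_cpow_neg]
  refine sum_le_sum fun k _ => ?_
  push_cast
  rw [← Real.rpow_neg_one]
  exact Real.rpow_le_rpow_of_exponent_le (by simp) (neg_le_neg hs)

lemma hasSum_natCast_add_cpow_neg {s : ℂ} (hs : 1 < s.re) (k : ℕ) :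
    HasSum (fun n : ℕ => ((n + k + 1 : ℕ) : ℂ) ^ (-s)) (riemannZeta s - partialZeta s k) :=
  (hasSum_nat_add_iff' k).mpr (hasSum_riemannZeta hs)

lemma summable_prod_cpow_neg {s₀ s : ℂ} (h₀ : 1 < s₀.re) (hs : 1 < s.re) :
    Summable (fun p : ℕ × ℕ =>
      ((p.1 + 1 : ℕ) : ℂ) ^ (-s₀) * ((p.1 + p.2 + 2 : ℕ) : ℂ) ^ (-s)) := by
  refine Summable.of_norm_bounded ((summable_rpow_neg h₀).mul_of_nonneg (summable_rpow_neg hs)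
    (fun _ => by positivity) (fun _ => by positivity)) fun ⟨m, n⟩ => ?_
  refine norm_natCast_succ_cpow_neg_mul_le s₀ m ?_
  rw [show m + n + 2 = (m + n + 1) + 1 by ring, norm_natCast_succ_cpow_neg]
  refine Real.rpow_le_rpow_of_nonpos (by positivity) ?_ (by linarith)
  push_cast
  linarith [m.cast_nonneg (α := ℝ)]

lemma tsum_prod_cpow_neg_eq {s₀ s : ℂ} (h₀ : 1 < s₀.re) (hs : 1 < s.re) :
    ∑' p : ℕ × ℕ, ((p.1 + 1 : ℕ) : ℂ) ^ (-s₀) * ((p.1 + p.2 + 2 : ℕ) : ℂ) ^ (-s)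
      = riemannZeta s₀ * riemannZeta s
        - ∑' m : ℕ, ((m + 1 : ℕ) : ℂ) ^ (-s₀) * partialZeta s (m + 1) := by
  have hsum := summable_prod_cpow_neg h₀ hs
  have hinner (m : ℕ) :
      HasSum (fun n : ℕ => ((m + 1 : ℕ) : ℂ) ^ (-s₀) * ((m + n + 2 : ℕ) : ℂ) ^ (-s))
        (((m + 1 : ℕ) : ℂ) ^ (-s₀) * (riemannZeta s - partialZeta s (m + 1))) := by
    refine ((hasSum_natCast_add_cpow_neg hs (m + 1)).mul_left _).congr_fun fun n => ?_
    simp only [show m + n + 2 = n + (m + 1) + 1 by ring]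
  have hpartial : Summable (fun m : ℕ => ((m + 1 : ℕ) : ℂ) ^ (-s₀) * partialZeta s (m + 1)) :=
    summable_natCast_succ_cpow_neg_mul h₀ fun m => by
      exact_mod_cast norm_partialZeta_le hs.le (m + 1)
  rw [hsum.tsum_prod' hsum.prod_factor, tsum_congr fun m => (hinner m).tsum_eq]
  simp only [mul_sub]
  exact (((hasSum_riemannZeta h₀).mul_right _).sub hpartial.hasSum).tsum_eq

lemma sum_Icc_one_div_natCast_add (a N : ℕ) :
    ∑ n ∈ Icc 1 N, (1 : ℂ) / ((a + n : ℕ) : ℂ) = harmonic (a + N) - harmonic a := by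
  induction N with
  | zero => simp
  | succ N ih =>
    rw [sum_Icc_succ_top (by omega), ih, ← add_assoc, harmonic_succ]
    push_cast
    ring

lemma sum_Icc_one_div_natCast_add_sub_log (a N : ℕ) :
    ∑ n ∈ Icc 1 N, (1 : ℂ) / ((a + n : ℕ) : ℂ) - Complex.log ((a + N : ℕ) : ℂ)
      = (((harmonic (a + N) : ℝ) - Real.log ((a + N : ℕ) : ℝ) : ℝ) : ℂ) - harmonic a := by
  rw [sum_Icc_one_div_natCast_add, ← Complex.natCast_log, Complex.ofReal_sub,
    Complex.ofReal_ratCast]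
  ring

lemma tendsto_sum_Icc_one_div_natCast_add_sub_log (a : ℕ) :
    Tendsto (fun N : ℕ =>
        ∑ n ∈ Icc 1 N, (1 : ℂ) / ((a + n : ℕ) : ℂ) - Complex.log ((a + N : ℕ) : ℂ))
      atTop (𝓝 (Real.eulerMascheroniConstant - harmonic a)) := by
  simp only [sum_Icc_one_div_natCast_add_sub_log]
  refine ((Complex.continuous_ofReal.tendsto _).comp ?_).sub_const _
  exact Real.tendsto_harmonic_sub_log.comp
    (tendsto_atTop_mono (Nat.le_add_left · a) tendsto_id)

lemma norm_sum_Icc_one_div_natCast_add_sub_log_le (a N : ℕ) :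
    ‖∑ n ∈ Icc 1 N, (1 : ℂ) / ((a + n : ℕ) : ℂ) - Complex.log ((a + N : ℕ) : ℂ)‖
      ≤ 2 + Real.log a := by
  rw [sum_Icc_one_div_natCast_add_sub_log]
  refine (norm_sub_le _ _).trans ?_
  rw [Complex.norm_real, Real.norm_eq_abs]
  linarith [abs_harmonic_sub_log_le_one (a + N), norm_harmonic_le a]

lemma tendsto_tsum_cpow_neg_mul_sum_Icc_sub_log {s₀ : ℂ} (h : 1 < s₀.re) :
    Tendsto (fun N : ℕ => ∑' m : ℕ, ((m + 1 : ℕ) : ℂ) ^ (-s₀) *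
        (∑ n ∈ Icc 1 N, (1 : ℂ) / ((m + 1 + n : ℕ) : ℂ) - Complex.log ((m + 1 + N : ℕ) : ℂ)))
      atTop (𝓝 (riemannZeta s₀ * Real.eulerMascheroniConstant
        - ∑' m : ℕ, ((m + 1 : ℕ) : ℂ) ^ (-s₀) * harmonic (m + 1))) := by
  have hharmonic : Summable (fun m : ℕ => ((m + 1 : ℕ) : ℂ) ^ (-s₀) * harmonic (m + 1)) :=
    summable_natCast_succ_cpow_neg_mul h fun m => by exact_mod_cast norm_harmonic_le (m + 1)
  have hlimit : ∑' m : ℕ, ((m + 1 : ℕ) : ℂ) ^ (-s₀) *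
        (Real.eulerMascheroniConstant - harmonic (m + 1))
      = riemannZeta s₀ * Real.eulerMascheroniConstant
        - ∑' m : ℕ, ((m + 1 : ℕ) : ℂ) ^ (-s₀) * harmonic (m + 1) := by
    simp only [mul_sub]
    exact (((hasSum_riemannZeta h).mul_right _).sub hharmonic.hasSum).tsum_eq
  rw [← hlimit]
  refine tendsto_tsum_of_dominated_convergence (summable_rpow_neg_mul_add_log h 2)
    (fun m => (tendsto_sum_Icc_one_div_natCast_add_sub_log (m + 1)).const_mul _)
    (Eventually.of_forall fun N m => norm_natCast_succ_cpow_neg_mul_le s₀ m ?_)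
  exact_mod_cast norm_sum_Icc_one_div_natCast_add_sub_log_le (m + 1) N

lemma tendsto_tsum_cpow_neg_mul_partialZeta {s₀ : ℂ} (h : 1 < s₀.re) :
    Tendsto (fun s : ℂ => ∑' m : ℕ, ((m + 1 : ℕ) : ℂ) ^ (-s₀) * partialZeta s (m + 1))
      (𝓝[{s | 1 ≤ s.re}] 1) (𝓝 (∑' m : ℕ, ((m + 1 : ℕ) : ℂ) ^ (-s₀) * harmonic (m + 1))) := by
  refine tendsto_tsum_of_dominated_convergence (summable_rpow_neg_mul_add_log h 1)
    (fun m => ?_) (eventually_nhdsWithin_of_forall fun s hs m =>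
      norm_natCast_succ_cpow_neg_mul_le s₀ m ?_)
  · rw [← partialZeta_one]
    exact (((continuous_partialZeta (m + 1)).tendsto 1).mono_left nhdsWithin_le_nhds).const_mul _
  · exact_mod_cast norm_partialZeta_le hs (m + 1)

theorem stmt15 (s₀ : ℂ) (h : 1 < s₀.re) (γ₂ : ℂ)
    (hγ₂ : Filter.Tendsto (fun N : ℕ =>
      ∑' m : ℕ, ((m + 1 : ℕ) : ℂ) ^ (-s₀) *
        ((∑ n ∈ Finset.Icc 1 N, (1 : ℂ) / ((m + 1 + n : ℕ) : ℂ))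
          - Complex.log ((m + 1 + N : ℕ) : ℂ)))
      Filter.atTop (nhds γ₂)) :
    Filter.Tendsto (fun σ : ℝ =>
      (∑' p : ℕ × ℕ, ((p.1 + 1 : ℕ) : ℂ) ^ (-s₀) * ((p.1 + p.2 + 2 : ℕ) : ℂ) ^ (-(σ : ℂ)))
        - riemannZeta s₀ / ((σ : ℂ) - 1))
      (nhdsWithin 1 (Set.Ioi 1)) (nhds γ₂) := by
  obtain rfl := tendsto_nhds_unique hγ₂ (tendsto_tsum_cpow_neg_mul_sum_Icc_sub_log h)
  have hofReal : Tendsto (fun σ : ℝ => (σ : ℂ)) (𝓝[>] 1) (𝓝[{s | 1 ≤ s.re}] 1) :=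
    tendsto_nhdsWithin_iff.mpr ⟨(Complex.continuous_ofReal.tendsto' 1 1 (by simp)).mono_left
      nhdsWithin_le_nhds, eventually_nhdsWithin_of_forall fun σ hσ => by simpa using hσ.le⟩
  have hζ :=
    ZetaAsymptotics.tendsto_riemannZeta_sub_one_div_nhds_right.const_mul (riemannZeta s₀)
  refine (hζ.sub ((tendsto_tsum_cpow_neg_mul_partialZeta h).comp hofReal)).congr' ?_
  filter_upwards [self_mem_nhdsWithin] with σ hσ
  rw [Function.comp_apply, tsum_prod_cpow_neg_eq h (by simpa using hσ)]
  ring
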